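/- Let T : Π → A be a function on a group Π with values in a commutative ring A satisfying (C1) T(1)=2 and (C2) T(g₁)T(g₂) = T(g₁g₂) + T(g₁⁻¹g₂). Then T satisfies (P3): T(g₁)T(g₂)T(g₃) + T(g₁g₂g₃) + T(g₁g₃g₂) − T(g₁g₂)T(g₃) − T(g₂g₃)T(g₁) − T(g₁g₃)T(g₂) = 0 for all g₁,g₂,g₃ ∈ Π. -/

import Mathlib

/-! Multiplying `T g₁ * T g₂ = T (g₁ * g₂) + T (g₁⁻¹ * g₂)` by `T g₃` and applying (C2) once more
to `T (g₁⁻¹ * g₂) * T g₃` produces the terms `T (g₁⁻¹ * g₂ * g₃)` and `T (g₂⁻¹ * g₁ * g₃)`; these are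
exactly the correction terms in (C2) for `T g₁ * T (g₂ * g₃)` and `T g₂ * T (g₁ * g₃)`. What is left
is `T (g₂ * g₁ * g₃) = T (g₁ * g₃ * g₂)`, i.e. that `T` is a class function. -/

section TraceRelations

variable {G A : Type*} [Group G] [CommRing A] {T : G → A}

theorem apply_inv_of_trace_relations (hC1 : T 1 = 2)
    (hC2 : ∀ g₁ g₂ : G, T g₁ * T g₂ = T (g₁ * g₂) + T (g₁⁻¹ * g₂)) (g : G) :
    T g⁻¹ = T g := by
  have h := hC2 g 1
  rw [hC1, mul_one, mul_one] at h
  linear_combination -h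

theorem apply_mul_comm_of_trace_relations (hC1 : T 1 = 2)
    (hC2 : ∀ g₁ g₂ : G, T g₁ * T g₂ = T (g₁ * g₂) + T (g₁⁻¹ * g₂)) (a b : G) :
    T (a * b) = T (b * a) := by
  have hinv : T (b⁻¹ * a) = T (a⁻¹ * b) := by
    rw [← apply_inv_of_trace_relations hC1 hC2, mul_inv_rev, inv_inv]
  linear_combination -hC2 a b + hC2 b a + hinv

end TraceRelations

theorem C_relations_imply_P3
    (G : Type*) [Group G] (A : Type*) [CommRing A]
    (T : G → A)
    (hC1 : T 1 = 2)
    (hC2 : ∀ g₁ g₂ : G, T g₁ * T g₂ = T (g₁ * g₂) + T (g₁⁻¹ * g₂)) :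
    ∀ g₁ g₂ g₃ : G,
      T g₁ * T g₂ * T g₃ + T (g₁ * g₂ * g₃) + T (g₁ * g₃ * g₂)
        - T (g₁ * g₂) * T g₃ - T (g₂ * g₃) * T g₁ - T (g₁ * g₃) * T g₂ = 0 := by
  intro g₁ g₂ g₃
  have hprod := hC2 g₁ g₂
  have hcorr := hC2 (g₁⁻¹ * g₂) g₃
  have h₁ := hC2 g₁ (g₂ * g₃)
  have h₂ := hC2 g₂ (g₁ * g₃)
  have hclass := apply_mul_comm_of_trace_relations hC1 hC2 g₂ (g₁ * g₃)
  simp only [mul_inv_rev, inv_inv, mul_assoc] at hcorr h₁ h₂ hclass ⊢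
  linear_combination T g₃ * hprod + hcorr - h₁ - h₂ - hclass
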